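/- Existence of the exact modified Hamiltonian for the symplectic Euler method for the harmonic oscillator (instance of Proposition 1(a)): let h ≠ 0 with cos h ≠ 0, and define Ĥ_SE(P,Q) = (sin h·(P² + Q²)/2 + (1 − cos h)·P·Q)/(h·cos h). Then for every (p₀,q₀) ∈ ℝ², setting p₁ = p₀·cos h − q₀·sin h and q₁ = p₀·sin h + q₀·cos h (the exact time-h harmonic-oscillator flow), one has −∂Ĥ_SE/∂Q(p₁, q₀) = (p₁ − p₀)/h and ∂Ĥ_SE/∂P(p₁, q₀) = (q₁ − q₀)/h. -/

import Mathlib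

/-!
Both partial derivatives of `Ĥ_SE` are linear with the common denominator `h cos h`. After
clearing it, the `Q`-identity is just the defining equation of `p₁`, and the `P`-identity
becomes `q₀ (1 - sin² h - cos² h) = 0`.
-/

noncomputable section

/-- The modified Hamiltonian of the symplectic Euler method with step `h` for the
harmonic oscillator. -/
def HSE (h P Q : ℝ) : ℝ :=
  (Real.sin h * (P ^ 2 + Q ^ 2) / 2 + (1 - Real.cos h) * P * Q) / (h * Real.cos h)

open Real

lemma hasDerivAt_HSE_snd (h P Q : ℝ) :
    HasDerivAt (fun Q => HSE h P Q) ((sin h * Q + (1 - cos h) * P) / (h * cos h)) Q := by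
  have numerator : HasDerivAt (fun Q => sin h * (P ^ 2 + Q ^ 2) / 2 + (1 - cos h) * P * Q)
      (sin h * Q + (1 - cos h) * P) Q := by
    refine ((((hasDerivAt_pow 2 Q).const_add (P ^ 2)).const_mul (sin h)).div_const 2).add
      ((hasDerivAt_id Q).const_mul ((1 - cos h) * P)) |>.congr_deriv ?_
    norm_num
    ring
  exact numerator.div_const _

lemma hasDerivAt_HSE_fst (h P Q : ℝ) :
    HasDerivAt (fun P => HSE h P Q) ((sin h * P + (1 - cos h) * Q) / (h * cos h)) P := by
  have numerator : HasDerivAt (fun P => sin h * (P ^ 2 + Q ^ 2) / 2 + (1 - cos h) * P * Q)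
      (sin h * P + (1 - cos h) * Q) P := by
    refine ((((hasDerivAt_pow 2 P).add_const (Q ^ 2)).const_mul (sin h)).div_const 2).add
      (((hasDerivAt_id P).const_mul (1 - cos h)).mul_const Q) |>.congr_deriv ?_
    norm_num
    ring
  exact numerator.div_const _

/-- existence of the exact modified Hamiltonian for the symplectic Euler
method for the harmonic oscillator: along the exact time-`h` flow
`(p₁, q₁) = (p₀ cos h − q₀ sin h, p₀ sin h + q₀ cos h)` one has
`−∂Ĥ_SE/∂Q(p₁, q₀) = (p₁ − p₀)/h` and `∂Ĥ_SE/∂P(p₁, q₀) = (q₁ − q₀)/h`. -/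
theorem stmt8 (h : ℝ) (hh : h ≠ 0) (hcos : Real.cos h ≠ 0) :
    ∀ p₀ q₀ p₁ q₁ : ℝ,
      p₁ = p₀ * Real.cos h - q₀ * Real.sin h →
      q₁ = p₀ * Real.sin h + q₀ * Real.cos h →
      -(deriv (fun Q => HSE h p₁ Q) q₀) = (p₁ - p₀) / h ∧
        deriv (fun P => HSE h P q₀) p₁ = (q₁ - q₀) / h := by
  rintro p₀ q₀ p₁ q₁ rfl rfl
  rw [(hasDerivAt_HSE_snd h _ q₀).deriv, (hasDerivAt_HSE_fst h _ q₀).deriv]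
  constructor
  · field_simp
    ring
  · field_simp
    linear_combination (-q₀) * sin_sq_add_cos_sq h
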